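/- arXiv:math/0308130 — 2 statements merged into one kernel-verified Lean document; each statement's English description precedes it below -/
import Mathlib

section
/- Let Ω be a bounded domain in ℝⁿ, and let g, h : ℝ² → ℝ be C¹ functions satisfying (G₁): g_u < 0, g_v < 0, h_u < 0, h_v < 0 everywhere, and (G₂): there exist c₀ > 0, c₁ > 0 with g(u,0) ≤ 0 for u ≥ c₀ and h(0,v) ≤ 0 for v ≥ c₁. Assume g(0,c₁) > λ₁ and h(c₀,0) > λ₁. Then the pair (ū, v̄) = (θ_{g(·,0)}, θ_{h(0,·)}) satisfies Δū + ū g(ū, v̄) < 0 and Δv̄ + v̄ h(ū, v̄) < 0 in Ω, i.e. it is a strict upper solution of the system Δu + u g(u,v) = 0, Δv + v h(u,v) = 0 with zero Dirichlet boundary data. -/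
open MeasureTheory Set

noncomputable def lap {n : ℕ} (u : EuclideanSpace ℝ (Fin n) → ℝ)
    (x : EuclideanSpace ℝ (Fin n)) : ℝ :=
  ∑ i : Fin n, fderiv ℝ (fun y => fderiv ℝ u y (EuclideanSpace.single i 1)) x
    (EuclideanSpace.single i 1)

/-- `u` is a nontrivial eigenfunction of `-Δ + q` with eigenvalue `lam`
on `Ω` with homogeneous Dirichlet boundary condition. -/
def IsDirichletEigenpair {n : ℕ} (Ω : Set (EuclideanSpace ℝ (Fin n)))
    (q : EuclideanSpace ℝ (Fin n) → ℝ) (lam : ℝ)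
    (u : EuclideanSpace ℝ (Fin n) → ℝ) : Prop :=
  ContDiffOn ℝ 2 u Ω ∧ ContinuousOn u (closure Ω) ∧
  (∃ x ∈ Ω, u x ≠ 0) ∧
  (∀ x ∈ Ω, -lap u x + q x * u x = lam * u x) ∧
  (∀ x ∈ frontier Ω, u x = 0)

/-- `lam` is the first (smallest) Dirichlet eigenvalue of `-Δ + q` on `Ω`. -/
def IsFirstEigenvalue {n : ℕ} (Ω : Set (EuclideanSpace ℝ (Fin n)))
    (q : EuclideanSpace ℝ (Fin n) → ℝ) (lam : ℝ) : Prop :=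
  (∃ u, IsDirichletEigenpair Ω q lam u) ∧
  ∀ μ : ℝ, (∃ u, IsDirichletEigenpair Ω q μ u) → lam ≤ μ

/-- `u` is a positive solution of the logistic problem
`Δu + u f(u) = 0` in `Ω`, `u > 0` in `Ω`, `u = 0` on `∂Ω`. -/
def IsLogisticSolution {n : ℕ} (Ω : Set (EuclideanSpace ℝ (Fin n))) (f : ℝ → ℝ)
    (u : EuclideanSpace ℝ (Fin n) → ℝ) : Prop :=
  ContDiffOn ℝ 2 u Ω ∧ ContinuousOn u (closure Ω) ∧
  (∀ x ∈ Ω, lap u x + u x * f (u x) = 0) ∧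
  (∀ x ∈ Ω, 0 < u x) ∧
  (∀ x ∈ frontier Ω, u x = 0)

/-- `(u, v)` solves the competition system
`Δu + u g(u,v) = 0`, `Δv + v h(u,v) = 0` in `Ω`, `(u,v) = (0,0)` on `∂Ω`. -/
def IsSystemSolution {n : ℕ} (Ω : Set (EuclideanSpace ℝ (Fin n)))
    (g h : ℝ → ℝ → ℝ) (u v : EuclideanSpace ℝ (Fin n) → ℝ) : Prop :=
  ContDiffOn ℝ 2 u Ω ∧ ContDiffOn ℝ 2 v Ω ∧
  ContinuousOn u (closure Ω) ∧ ContinuousOn v (closure Ω) ∧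
  (∀ x ∈ Ω, lap u x + u x * g (u x) (v x) = 0) ∧
  (∀ x ∈ Ω, lap v x + v x * h (u x) (v x) = 0) ∧
  (∀ x ∈ frontier Ω, u x = 0 ∧ v x = 0)

/-- `(u₁,...,u_N)` solves the `N`-species system
`Δuᵢ + uᵢ gᵢ(u₁,...,u_N) = 0` in `Ω`, `uᵢ = 0` on `∂Ω`. -/
def IsNSystemSolution {n N : ℕ} (Ω : Set (EuclideanSpace ℝ (Fin n)))
    (g : Fin N → (Fin N → ℝ) → ℝ)
    (u : Fin N → EuclideanSpace ℝ (Fin n) → ℝ) : Prop :=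
  ∀ i, ContDiffOn ℝ 2 (u i) Ω ∧ ContinuousOn (u i) (closure Ω) ∧
    (∀ x ∈ Ω, lap (u i) x + u i x * g i (fun j => u j x) = 0) ∧
    (∀ x ∈ frontier Ω, u i x = 0)

/-! Since `θ_{h(0,·)} > 0` and `g` is strictly decreasing in its second argument,
`g(ū, v̄) < g(ū, 0)`; multiplying by `ū > 0` and using `Δū + ū g(ū, 0) = 0` gives the strict
inequality for `ū`, and symmetrically for `v̄`. -/

namespace IsLogisticSolution

variable {n : ℕ} {Ω : Set (EuclideanSpace ℝ (Fin n))} {f : ℝ → ℝ}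
  {u : EuclideanSpace ℝ (Fin n) → ℝ} {x : EuclideanSpace ℝ (Fin n)}

theorem pos (hu : IsLogisticSolution Ω f u) (hx : x ∈ Ω) : 0 < u x :=
  hu.2.2.2.1 x hx

theorem lap_add_mul_lt_zero (hu : IsLogisticSolution Ω f u) (hx : x ∈ Ω) {c : ℝ}
    (hc : c < f (u x)) : lap u x + u x * c < 0 := by
  linarith [hu.2.2.1 x hx, mul_lt_mul_of_pos_left hc (hu.pos hx)]

end IsLogisticSolution

theorem competition_upper_solution_general {n : ℕ} (Ω : Set (EuclideanSpace ℝ (Fin n)))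
    (g h : ℝ → ℝ → ℝ)
    (hgv : ∀ a b : ℝ, deriv (fun t => g a t) b < 0)
    (hhu : ∀ a b : ℝ, deriv (fun t => h t b) a < 0)
    (θg0 θh0 : EuclideanSpace ℝ (Fin n) → ℝ)
    (hθ₂ : IsLogisticSolution Ω (fun t => g t 0) θg0)
    (hθ₄ : IsLogisticSolution Ω (fun t => h 0 t) θh0) :
    ∀ x ∈ Ω, lap θg0 x + θg0 x * g (θg0 x) (θh0 x) < 0 ∧
      lap θh0 x + θh0 x * h (θg0 x) (θh0 x) < 0 := by
  intro x hx
  have hg_lt : g (θg0 x) (θh0 x) < g (θg0 x) 0 :=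
    strictAnti_of_deriv_neg (hgv (θg0 x)) (hθ₄.pos hx)
  have hh_lt : h (θg0 x) (θh0 x) < h 0 (θh0 x) :=
    strictAnti_of_deriv_neg (fun t => hhu t (θh0 x)) (hθ₂.pos hx)
  exact ⟨hθ₂.lap_add_mul_lt_zero hx hg_lt, hθ₄.lap_add_mul_lt_zero hx hh_lt⟩

/-- `(θ_{g(·,0)}, θ_{h(0,·)})` is a strict upper solution of the competition system. -/
theorem competition_upper_solution {n : ℕ} (Ω : Set (EuclideanSpace ℝ (Fin n)))
    (hΩo : IsOpen Ω) (hΩc : IsConnected Ω) (hΩb : Bornology.IsBounded Ω)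
    (g h : ℝ → ℝ → ℝ)
    (hg : ContDiff ℝ 1 (Function.uncurry g)) (hh : ContDiff ℝ 1 (Function.uncurry h))
    (hgu : ∀ a b : ℝ, deriv (fun t => g t b) a < 0)
    (hgv : ∀ a b : ℝ, deriv (fun t => g a t) b < 0)
    (hhu : ∀ a b : ℝ, deriv (fun t => h t b) a < 0)
    (hhv : ∀ a b : ℝ, deriv (fun t => h a t) b < 0)
    (c₀ c₁ : ℝ) (hc₀ : 0 < c₀) (hc₁ : 0 < c₁)
    (hG2g : ∀ t, c₀ ≤ t → g t 0 ≤ 0) (hG2h : ∀ t, c₁ ≤ t → h 0 t ≤ 0)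
    (lam₁ : ℝ) (hlam : IsFirstEigenvalue Ω (fun _ => 0) lam₁)
    (hge : lam₁ < g 0 c₁) (hhe : lam₁ < h c₀ 0)
    (θg0 θh0 : EuclideanSpace ℝ (Fin n) → ℝ)
    (hθ₂ : IsLogisticSolution Ω (fun t => g t 0) θg0)
    (hθ₄ : IsLogisticSolution Ω (fun t => h 0 t) θh0) :
    ∀ x ∈ Ω, lap θg0 x + θg0 x * g (θg0 x) (θh0 x) < 0 ∧
      lap θh0 x + θh0 x * h (θg0 x) (θh0 x) < 0 :=
  competition_upper_solution_general Ω g h hgv hhu θg0 θh0 hθ₂ hθ₄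
end

section
/- Let Ω be a bounded domain in ℝⁿ, and let g, h : ℝ² → ℝ be C¹ functions satisfying (G₁): g_u < 0, g_v < 0, h_u < 0, h_v < 0 everywhere, and (G₂): there exist c₀ > 0, c₁ > 0 with g(u,0) ≤ 0 for u ≥ c₀ and h(0,v) ≤ 0 for v ≥ c₁. Assume g(0,c₁) > λ₁ and h(c₀,0) > λ₁. Then the pair (u̲, v̲) = (θ_{g(·,c₁)}, θ_{h(c₀,·)}) satisfies u̲ ≤ c₀, v̲ ≤ c₁, Δu̲ + u̲ g(u̲, v̲) ≥ 0 and Δv̲ + v̲ h(u̲, v̲) ≥ 0 in Ω, i.e. it is a lower solution of the system Δu + u g(u,v) = 0, Δv + v h(u,v) = 0 with zero Dirichlet boundary data. -/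
open MeasureTheory Set

/-! A positive solution of `Δθ + θ f(θ) = 0` with `f < 0` beyond `c ≥ 0` stays below `c`: at an
interior maximum above `c` the Laplacian would be both `≤ 0` and `= -θ f(θ) > 0`. As
`g(t,c₁) < g(t,0) ≤ 0` for `t ≥ c₀`, this gives `θ_{g(·,c₁)} ≤ c₀`, and likewise
`θ_{h(c₀,·)} ≤ c₁`. Since `g` and `h` decrease in each variable,
`g(θ_{g(·,c₁)}, θ_{h(c₀,·)}) ≥ g(θ_{g(·,c₁)}, c₁)` and likewise for `h`, which turns the two
logistic equations into the two lower-solution inequalities. -/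

open Filter Topology

theorem IsLocalMax.deriv_deriv_nonpos {f : ℝ → ℝ} {a : ℝ} (hmax : IsLocalMax f a)
    (hf : ContinuousAt f a) : deriv (deriv f) a ≤ 0 := by
  by_contra! hpos
  -- By the second derivative test `a` would also be a local minimum, so `f` is locally constant.
  have hmin : IsLocalMin f a := isLocalMin_of_deriv_deriv_pos hpos hmax.deriv_eq_zero hf
  have hconst : f =ᶠ[𝓝 a] fun _ => f a := by
    filter_upwards [hmin, hmax] with y hy₁ hy₂ using le_antisymm hy₂ hy₁
  have hzero : deriv (deriv f) a = 0 := by simpa using hconst.deriv.deriv_eq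
  exact hpos.ne' hzero

theorem IsLocalMax.fderiv_fderiv_apply_nonpos {E : Type*} [NormedAddCommGroup E]
    [NormedSpace ℝ E] {u : E → ℝ} {x₀ : E} (hmax : IsLocalMax u x₀)
    (hu : ContDiffAt ℝ 2 u x₀) (e : E) :
    fderiv ℝ (fun y => fderiv ℝ u y e) x₀ e ≤ 0 := by
  obtain ⟨L, hL, rfl⟩ : ∃ L : ℝ → E, (∀ t, HasDerivAt L e t) ∧ L 0 = x₀ :=
    ⟨fun t => x₀ + t • e, fun t => by simpa using ((hasDerivAt_id t).smul_const e).const_add x₀,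
      by simp⟩
  have hψ : DifferentiableAt ℝ (fun y => fderiv ℝ u y e) (L 0) :=
    ((hu.fderiv_right (m := 1) le_rfl).differentiableAt one_ne_zero).clm_apply
      (differentiableAt_const e)
  have hderiv : deriv (u ∘ L) =ᶠ[𝓝 0] (fun y => fderiv ℝ u y e) ∘ L := by
    have hdiff : ∀ᶠ y in 𝓝 (L 0), DifferentiableAt ℝ u y :=
      (hu.eventually (by simp)).mono fun y hy => hy.differentiableAt two_ne_zero
    filter_upwards [(hL 0).continuousAt.tendsto.eventually hdiff] with t ht
    exact (ht.hasFDerivAt.comp_hasDerivAt t (hL t)).deriv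
  rw [← (hψ.hasFDerivAt.comp_hasDerivAt 0 (hL 0)).deriv, ← hderiv.deriv_eq]
  exact (hmax.comp_continuous (hL 0).continuousAt).deriv_deriv_nonpos
    (hu.continuousAt.comp (hL 0).continuousAt)

theorem IsLocalMax.lap_nonpos {n : ℕ} {u : EuclideanSpace ℝ (Fin n) → ℝ}
    {x₀ : EuclideanSpace ℝ (Fin n)} (hmax : IsLocalMax u x₀) (hu : ContDiffAt ℝ 2 u x₀) :
    lap u x₀ ≤ 0 :=
  Finset.sum_nonpos fun _ _ => hmax.fderiv_fderiv_apply_nonpos hu _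

theorem le_of_frontier_le_of_lap_pos {n : ℕ} {Ω : Set (EuclideanSpace ℝ (Fin n))}
    (hΩo : IsOpen Ω) (hΩb : Bornology.IsBounded Ω) {u : EuclideanSpace ℝ (Fin n) → ℝ} {c : ℝ}
    (hu : ContDiffOn ℝ 2 u Ω) (hcont : ContinuousOn u (closure Ω))
    (hbd : ∀ x ∈ frontier Ω, u x ≤ c) (hlap : ∀ x ∈ Ω, c < u x → 0 < lap u x) :
    ∀ x ∈ Ω, u x ≤ c := by
  intro x hx
  by_contra! hcx
  obtain ⟨x₀, hx₀, hx₀max⟩ :=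
    hΩb.isCompact_closure.exists_isMaxOn ⟨x, subset_closure hx⟩ hcont
  have hcx₀ : c < u x₀ := hcx.trans_le (hx₀max (subset_closure hx))
  have hx₀Ω : x₀ ∈ Ω := by
    by_contra hx₀Ω
    have hx₀fr : x₀ ∈ frontier Ω := by rw [hΩo.frontier_eq]; exact ⟨hx₀, hx₀Ω⟩
    exact (hbd x₀ hx₀fr).not_gt hcx₀
  have hmax : IsLocalMax u x₀ :=
    Filter.mem_of_superset (hΩo.mem_nhds hx₀Ω) fun y hy => hx₀max (subset_closure hy)
  exact (hmax.lap_nonpos (hu.contDiffAt (hΩo.mem_nhds hx₀Ω))).not_gt (hlap x₀ hx₀Ω hcx₀)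

theorem IsLogisticSolution.le_of_neg {n : ℕ} {Ω : Set (EuclideanSpace ℝ (Fin n))}
    (hΩo : IsOpen Ω) (hΩb : Bornology.IsBounded Ω) {f : ℝ → ℝ}
    {u : EuclideanSpace ℝ (Fin n) → ℝ} (hu : IsLogisticSolution Ω f u) {c : ℝ} (hc : 0 ≤ c)
    (hf : ∀ t, c ≤ t → f t < 0) : ∀ x ∈ Ω, u x ≤ c := by
  obtain ⟨hC2, hcont, hpde, hpos, hbd⟩ := hu
  refine le_of_frontier_le_of_lap_pos hΩo hΩb hC2 hcont (fun x hx => (hbd x hx).trans_le hc) ?_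
  intro x hx hcx
  have hlap : lap u x = -(u x * f (u x)) := eq_neg_of_add_eq_zero_left (hpde x hx)
  rw [hlap, neg_pos]
  exact mul_neg_of_pos_of_neg (hpos x hx) (hf _ hcx.le)

theorem IsLogisticSolution.lap_add_mul_nonneg {n : ℕ} {Ω : Set (EuclideanSpace ℝ (Fin n))}
    {f : ℝ → ℝ} {u : EuclideanSpace ℝ (Fin n) → ℝ} (hu : IsLogisticSolution Ω f u)
    {x : EuclideanSpace ℝ (Fin n)} (hx : x ∈ Ω) {r : ℝ} (hr : f (u x) ≤ r) :
    0 ≤ lap u x + u x * r := by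
  have hpde := hu.2.2.1 x hx
  nlinarith [mul_le_mul_of_nonneg_left hr (hu.2.2.2.1 x hx).le]

theorem competition_lower_solution_general {n : ℕ} (Ω : Set (EuclideanSpace ℝ (Fin n)))
    (hΩo : IsOpen Ω) (hΩb : Bornology.IsBounded Ω)
    (g h : ℝ → ℝ → ℝ)
    (hgv : ∀ a b : ℝ, deriv (fun t => g a t) b < 0)
    (hhu : ∀ a b : ℝ, deriv (fun t => h t b) a < 0)
    (c₀ c₁ : ℝ) (hc₀ : 0 < c₀) (hc₁ : 0 < c₁)
    (hG2g : ∀ t, c₀ ≤ t → g t 0 ≤ 0) (hG2h : ∀ t, c₁ ≤ t → h 0 t ≤ 0)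
    (θgc₁ θhc₀ : EuclideanSpace ℝ (Fin n) → ℝ)
    (hθ₁ : IsLogisticSolution Ω (fun t => g t c₁) θgc₁)
    (hθ₃ : IsLogisticSolution Ω (fun t => h c₀ t) θhc₀) :
    ∀ x ∈ Ω, θgc₁ x ≤ c₀ ∧ θhc₀ x ≤ c₁ ∧
      0 ≤ lap θgc₁ x + θgc₁ x * g (θgc₁ x) (θhc₀ x) ∧
      0 ≤ lap θhc₀ x + θhc₀ x * h (θgc₁ x) (θhc₀ x) := by
  have hg_anti : ∀ a, StrictAnti (g a) := fun a => strictAnti_of_deriv_neg (hgv a)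
  have hh_anti : ∀ b, StrictAnti (h · b) := fun b => strictAnti_of_deriv_neg (hhu · b)
  have hθ₁_le : ∀ x ∈ Ω, θgc₁ x ≤ c₀ :=
    hθ₁.le_of_neg hΩo hΩb hc₀.le fun t ht => (hg_anti t hc₁).trans_le (hG2g t ht)
  have hθ₃_le : ∀ x ∈ Ω, θhc₀ x ≤ c₁ :=
    hθ₃.le_of_neg hΩo hΩb hc₁.le fun t ht => (hh_anti t hc₀).trans_le (hG2h t ht)
  intro x hx
  exact ⟨hθ₁_le x hx, hθ₃_le x hx,
    hθ₁.lap_add_mul_nonneg hx ((hg_anti _).antitone (hθ₃_le x hx)),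
    hθ₃.lap_add_mul_nonneg hx ((hh_anti _).antitone (hθ₁_le x hx))⟩

/-- `(θ_{g(·,c₁)}, θ_{h(c₀,·)})` satisfies `θ_{g(·,c₁)} ≤ c₀`, `θ_{h(c₀,·)} ≤ c₁`
and is a lower solution of the competition system. -/
theorem competition_lower_solution {n : ℕ} (Ω : Set (EuclideanSpace ℝ (Fin n)))
    (hΩo : IsOpen Ω) (hΩc : IsConnected Ω) (hΩb : Bornology.IsBounded Ω)
    (g h : ℝ → ℝ → ℝ)
    (hg : ContDiff ℝ 1 (Function.uncurry g)) (hh : ContDiff ℝ 1 (Function.uncurry h))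
    (hgu : ∀ a b : ℝ, deriv (fun t => g t b) a < 0)
    (hgv : ∀ a b : ℝ, deriv (fun t => g a t) b < 0)
    (hhu : ∀ a b : ℝ, deriv (fun t => h t b) a < 0)
    (hhv : ∀ a b : ℝ, deriv (fun t => h a t) b < 0)
    (c₀ c₁ : ℝ) (hc₀ : 0 < c₀) (hc₁ : 0 < c₁)
    (hG2g : ∀ t, c₀ ≤ t → g t 0 ≤ 0) (hG2h : ∀ t, c₁ ≤ t → h 0 t ≤ 0)
    (lam₁ : ℝ) (hlam : IsFirstEigenvalue Ω (fun _ => 0) lam₁)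
    (hge : lam₁ < g 0 c₁) (hhe : lam₁ < h c₀ 0)
    (θgc₁ θhc₀ : EuclideanSpace ℝ (Fin n) → ℝ)
    (hθ₁ : IsLogisticSolution Ω (fun t => g t c₁) θgc₁)
    (hθ₃ : IsLogisticSolution Ω (fun t => h c₀ t) θhc₀) :
    ∀ x ∈ Ω, θgc₁ x ≤ c₀ ∧ θhc₀ x ≤ c₁ ∧
      0 ≤ lap θgc₁ x + θgc₁ x * g (θgc₁ x) (θhc₀ x) ∧
      0 ≤ lap θhc₀ x + θhc₀ x * h (θgc₁ x) (θhc₀ x) :=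
  competition_lower_solution_general Ω hΩo hΩb g h hgv hhu c₀ c₁ hc₀ hc₁ hG2g hG2h θgc₁ θhc₀ hθ₁ hθ₃
end
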